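/- Let M be a self-adjoint operator on a complex Hilbert space H with M ≥ c > 0 (coercive), and let J be a unitary, skew-adjoint operator on H commuting with the domain structure (J² = −Id). Then for every t ∈ ℝ, the operator e^{−t M^{1/2} J M^{1/2}} is unitary on H, and M^{−1/2} e^{−t M^{1/2} J M^{1/2}} M^{1/2} defines a uniformly bounded (in t) group of operators on the domain of M equipped with the graph norm, whose trajectories solve Φ'(t) = −J M Φ(t). -/

import Mathlib

open scoped ComplexInnerProductSpace

noncomputable section

/-!
Coercivity puts the spectrum of `M` in `[c, ∞)`, so `S = M^{1/2}` is invertible with inverse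
`B = M^{-1/2}` and `S * S = M`. The generator `S J S` is skew-adjoint, hence `exp (-t S J S)` is
unitary and the conjugated family is bounded by `‖B‖ * ‖S‖`. Since all operators are bounded, the
formal identity is a genuine conjugation of exponentials:
`B * exp (-t S J S) * S = exp (-t B (S J S) S) = exp (-t J M)`, whose derivative is `-J M exp (-t J M)`.
-/

section SqrtCFC

variable {A : Type*} [Ring A] [StarRing A] [Algebra ℝ A] [TopologicalSpace A]
  [ContinuousFunctionalCalculus ℝ A IsSelfAdjoint] {a : A}

theorem cfc_sqrt_mul_self (h : ∀ x ∈ spectrum ℝ a, 0 ≤ x) (ha : IsSelfAdjoint a := by cfc_tac) :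
    cfc Real.sqrt a * cfc Real.sqrt a = a := by
  rw [← cfc_mul ..]
  conv_rhs => rw [← cfc_id' ℝ a]
  exact cfc_congr fun x hx => Real.mul_self_sqrt (h x hx)

theorem cfc_inv_sqrt_mul_cfc_sqrt (h : ∀ x ∈ spectrum ℝ a, 0 < x)
    (ha : IsSelfAdjoint a := by cfc_tac) :
    cfc (fun x => (√x)⁻¹) a * cfc Real.sqrt a = 1 := by
  have hcont : ContinuousOn (fun x => (√x)⁻¹) (spectrum ℝ a) :=
    Real.continuous_sqrt.continuousOn.inv₀ fun x hx => (Real.sqrt_pos.2 (h x hx)).ne'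
  rw [← cfc_mul .., ← cfc_const_one ℝ a]
  exact cfc_congr fun x hx => inv_mul_cancel₀ (Real.sqrt_pos.2 (h x hx)).ne'

theorem cfc_sqrt_mul_cfc_inv_sqrt (h : ∀ x ∈ spectrum ℝ a, 0 < x)
    (ha : IsSelfAdjoint a := by cfc_tac) :
    cfc Real.sqrt a * cfc (fun x => (√x)⁻¹) a = 1 :=
  (cfc_commute_cfc _ _ a).eq.symm.trans (cfc_inv_sqrt_mul_cfc_sqrt h)

end SqrtCFC

theorem NormedSpace.exp_conj_of_mul_eq_one {𝔸 : Type*} [NormedRing 𝔸] [NormedAlgebra ℚ 𝔸]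
    [CompleteSpace 𝔸] {b s : 𝔸} (hbs : b * s = 1) (hsb : s * b = 1) (x : 𝔸) :
    b * exp x * s = exp (b * x * s) :=
  (exp_units_conj ⟨b, s, hbs, hsb⟩ x).symm

theorem ContinuousLinearMap.hasDerivAt_exp_neg_smul_apply {E : Type*} [NormedAddCommGroup E]
    [NormedSpace ℂ E] [CompleteSpace E] (T : E →L[ℂ] E) (x : E) (t : ℝ) :
    HasDerivAt (fun s : ℝ => NormedSpace.exp ((-s) • T) x)
      (-T (NormedSpace.exp ((-t) • T) x)) t := by
  have := ((ContinuousLinearMap.apply ℂ E x).restrictScalars ℝ).hasFDerivAt.comp_hasDerivAt t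
    (hasDerivAt_exp_smul_const' (-T) t)
  simpa [Function.comp_def, smul_neg, neg_smul] using this

namespace ContinuousLinearMap

variable {𝕜 E : Type*} [RCLike 𝕜] [NormedAddCommGroup E] [InnerProductSpace 𝕜 E] [CompleteSpace E]

theorem mem_skewAdjoint_of_inner_map_left {T : E →L[𝕜] E}
    (hT : ∀ x y, inner 𝕜 (T x) y = -inner 𝕜 x (T y)) : T ∈ skewAdjoint (E →L[𝕜] E) := by
  rw [skewAdjoint.mem_iff, star_eq_adjoint, eq_comm, eq_adjoint_iff]
  intro x y
  rw [neg_apply, inner_neg_left, hT, neg_neg]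

variable {H : Type*} [NormedAddCommGroup H] [InnerProductSpace ℂ H] [CompleteSpace H]

theorem algebraMap_le_of_coercive {T : H →L[ℂ] H} (hT : IsSelfAdjoint T) {c : ℝ}
    (hc : ∀ x, c * ‖x‖ ^ 2 ≤ (⟪x, T x⟫).re) : algebraMap ℝ (H →L[ℂ] H) c ≤ T := by
  rw [le_def, isPositive_def']
  refine ⟨hT.sub (.algebraMap _ (.all c)), fun x => ?_⟩
  rw [reApplyInnerSelf, sub_apply, inner_sub_left, map_sub, inner_re_symm,
    Algebra.algebraMap_eq_smul_one, smul_apply, one_apply_eq_self, ← Complex.coe_smul,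
    inner_smul_left, inner_self_eq_norm_sq_to_K]
  simpa [← Complex.ofReal_pow] using hc x

end ContinuousLinearMap

theorem CStarRing.norm_mul_unitary_mul_le {E : Type*} [NormedRing E] [StarRing E] [CStarRing E]
    (b s : E) {u : E} (hu : u ∈ unitary E) : ‖b * (u * s)‖ ≤ ‖b‖ * ‖s‖ :=
  (norm_mul_le _ _).trans_eq (by rw [CStarRing.norm_coe_unitary_mul ⟨u, hu⟩])

theorem hamiltonian_propagator_stability_general
    {H : Type*} [NormedAddCommGroup H] [InnerProductSpace ℂ H] [CompleteSpace H]
    (M J : H →L[ℂ] H) (hM : IsSelfAdjoint M)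
    (c : ℝ) (hc : 0 < c) (hcoer : ∀ x : H, c * ‖x‖ ^ 2 ≤ (⟪x, M x⟫).re)
    (hJskew : ∀ x y : H, ⟪J x, y⟫ = -⟪x, J y⟫) :
    (∀ t : ℝ, NormedSpace.exp ((-t) • ((cfc Real.sqrt M).comp
        (J.comp (cfc Real.sqrt M)))) ∈ unitary (H →L[ℂ] H)) ∧
    (∃ C : ℝ, ∀ t : ℝ,
      ‖(cfc (fun x : ℝ => (Real.sqrt x)⁻¹) M).comp
        ((NormedSpace.exp ((-t) • ((cfc Real.sqrt M).comp
          (J.comp (cfc Real.sqrt M))))).comp (cfc Real.sqrt M))‖ ≤ C) ∧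
    (∀ (Φ0 : H) (t : ℝ),
      HasDerivAt
        (fun s : ℝ => ((cfc (fun x : ℝ => (Real.sqrt x)⁻¹) M).comp
          ((NormedSpace.exp ((-s) • ((cfc Real.sqrt M).comp
            (J.comp (cfc Real.sqrt M))))).comp (cfc Real.sqrt M))) Φ0)
        (-(J (M (((cfc (fun x : ℝ => (Real.sqrt x)⁻¹) M).comp
          ((NormedSpace.exp ((-t) • ((cfc Real.sqrt M).comp
            (J.comp (cfc Real.sqrt M))))).comp (cfc Real.sqrt M))) Φ0))))
        t) := by
  -- `exp` does not depend on this choice; it only unlocks the `ℚ`-algebra API of `exp`.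
  let : NormedAlgebra ℚ (H →L[ℂ] H) := NormedAlgebra.restrictScalars ℚ ℂ _
  set S := cfc Real.sqrt M
  set B := cfc (fun x : ℝ => (√x)⁻¹) M
  have hspec : ∀ x ∈ spectrum ℝ M, 0 < x := fun x hx =>
    hc.trans_le <| (algebraMap_le_iff_le_spectrum hM).1
      (ContinuousLinearMap.algebraMap_le_of_coercive hM hcoer) x hx
  have hBS : B * S = 1 := cfc_inv_sqrt_mul_cfc_sqrt hspec
  have hSB : S * B = 1 := cfc_sqrt_mul_cfc_inv_sqrt hspec
  have hSS : S * S = M := cfc_sqrt_mul_self fun x hx => (hspec x hx).le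
  have hskew : S * (J * S) ∈ skewAdjoint (H →L[ℂ] H) := by
    have hS : IsSelfAdjoint S := cfc_predicate _ _
    simpa only [hS.star_eq, mul_assoc] using
      skewAdjoint.conjugate' (J.mem_skewAdjoint_of_inner_map_left hJskew) S
  have hunitary (t : ℝ) :
      NormedSpace.exp ((-t) • S.comp (J.comp S)) ∈ unitary (H →L[ℂ] H) :=
    NormedSpace.exp_mem_unitary_of_mem_skewAdjoint (skewAdjoint.smul_mem (-t) hskew)
  have hconj (t : ℝ) : B.comp ((NormedSpace.exp ((-t) • S.comp (J.comp S))).comp S) =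
      NormedSpace.exp ((-t) • (J * M)) := by
    have hgen : B * ((-t) • (S * (J * S))) * S = (-t) • (J * M) := by
      rw [← hSS, mul_smul_comm, smul_mul_assoc]
      simp only [← mul_assoc, hBS, one_mul]
    rw [← hgen, ← NormedSpace.exp_conj_of_mul_eq_one hBS hSB]
    exact (mul_assoc _ _ _).symm
  refine ⟨hunitary, ⟨‖B‖ * ‖S‖, fun t => CStarRing.norm_mul_unitary_mul_le B S (hunitary t)⟩,
    fun Φ0 t => ?_⟩
  simp only [hconj]
  exact (J * M).hasDerivAt_exp_neg_smul_apply Φ0 t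

theorem hamiltonian_propagator_stability
    {H : Type*} [NormedAddCommGroup H] [InnerProductSpace ℂ H] [CompleteSpace H]
    (M J : H →L[ℂ] H) (hM : IsSelfAdjoint M)
    (c : ℝ) (hc : 0 < c) (hcoer : ∀ x : H, c * ‖x‖ ^ 2 ≤ (⟪x, M x⟫).re)
    (hJu : J ∈ unitary (H →L[ℂ] H)) (hJskew : ∀ x y : H, ⟪J x, y⟫ = -⟪x, J y⟫)
    (hJ2 : J.comp J = -1) :
    (∀ t : ℝ, NormedSpace.exp ((-t) • ((cfc Real.sqrt M).comp
        (J.comp (cfc Real.sqrt M)))) ∈ unitary (H →L[ℂ] H)) ∧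
    (∃ C : ℝ, ∀ t : ℝ,
      ‖(cfc (fun x : ℝ => (Real.sqrt x)⁻¹) M).comp
        ((NormedSpace.exp ((-t) • ((cfc Real.sqrt M).comp
          (J.comp (cfc Real.sqrt M))))).comp (cfc Real.sqrt M))‖ ≤ C) ∧
    (∀ (Φ0 : H) (t : ℝ),
      HasDerivAt
        (fun s : ℝ => ((cfc (fun x : ℝ => (Real.sqrt x)⁻¹) M).comp
          ((NormedSpace.exp ((-s) • ((cfc Real.sqrt M).comp
            (J.comp (cfc Real.sqrt M))))).comp (cfc Real.sqrt M))) Φ0)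
        (-(J (M (((cfc (fun x : ℝ => (Real.sqrt x)⁻¹) M).comp
          ((NormedSpace.exp ((-t) • ((cfc Real.sqrt M).comp
            (J.comp (cfc Real.sqrt M))))).comp (cfc Real.sqrt M))) Φ0))))
        t) :=
  hamiltonian_propagator_stability_general M J hM c hc hcoer hJskew

end
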